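/- arXiv:2303.06515 — 3 statements merged into one kernel-verified Lean document; each statement's English description precedes it below -/
import Mathlib

section
/- Let H be a real Hilbert space, let F : H → ℝ, let u, uⁿ ∈ H, and let g ∈ H be a subgradient of F at uⁿ in the sense that F(uⁿ) − F(u) ≤ ⟨uⁿ − u, g⟩. Let η > 0, ε ≥ 0, let g̃ ∈ H satisfy ‖g − g̃‖ ≤ ε/η, and set u^{n+1} = uⁿ − η·g̃. Then F(uⁿ) − F(u) ≤ (‖uⁿ − u‖² − ‖u^{n+1} − u‖²)/(2η) + η‖g‖² + (ε/η)‖uⁿ − u‖ + ε²/η. -/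
/-!
Expanding the square in `‖uⁿ⁺¹ - u‖² = ‖(uⁿ - u) - η g̃‖²` expresses `⟨uⁿ - u, g̃⟩` as the telescoping
term `(‖uⁿ - u‖² - ‖uⁿ⁺¹ - u‖²)/(2η)` plus `(η/2)‖g̃‖²`. Replacing `g̃` by the true subgradient `g`
costs at most `(ε/η)‖uⁿ - u‖` by Cauchy–Schwarz, and `(η/2)‖g̃‖² ≤ (η/2)(‖g‖ + ε/η)² ≤ η‖g‖² + ε²/η`.
-/

theorem norm_sq_le_two_mul_add_of_norm_sub_le {E : Type*} [SeminormedAddCommGroup E] {g g' : E}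
    {δ : ℝ} (h : ‖g - g'‖ ≤ δ) :
    ‖g'‖ ^ 2 ≤ 2 * (‖g‖ ^ 2 + δ ^ 2) := by
  have htri : ‖g'‖ ≤ ‖g‖ + δ := (norm_le_norm_add_norm_sub g g').trans (by gcongr)
  nlinarith [norm_nonneg g', sq_nonneg (‖g‖ - δ)]

section

variable {E : Type*} [NormedAddCommGroup E] [InnerProductSpace ℝ E]

theorem real_inner_eq_norm_sq_sub_norm_sub_smul_sq_div (a v : E) {η : ℝ} (hη : η ≠ 0) :
    inner ℝ a v = (‖a‖ ^ 2 - ‖a - η • v‖ ^ 2) / (2 * η) + η / 2 * ‖v‖ ^ 2 := by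
  rw [norm_sub_sq_real, real_inner_smul_right, norm_smul, Real.norm_eq_abs, mul_pow, sq_abs]
  field_simp
  ring

theorem real_inner_le_inner_add_of_norm_sub_le (a : E) {g g' : E} {δ : ℝ} (h : ‖g - g'‖ ≤ δ) :
    inner ℝ a g ≤ inner ℝ a g' + δ * ‖a‖ := by
  have hcs : inner ℝ a (g - g') ≤ ‖a‖ * δ :=
    (real_inner_le_norm a (g - g')).trans (mul_le_mul_of_nonneg_left h (norm_nonneg a))
  rw [inner_sub_right] at hcs
  linarith

end

theorem per_step_descent_bound_general
    {H : Type*} [NormedAddCommGroup H] [InnerProductSpace ℝ H]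
    (F : H → ℝ) (u un : H) (g : H)
    (hsubgrad : F un - F u ≤ inner ℝ (un - u) g)
    (η ε : ℝ) (hη : 0 < η)
    (gtilde : H) (hgtilde : ‖g - gtilde‖ ≤ ε / η)
    (unext : H) (hunext : unext = un - η • gtilde) :
    F un - F u ≤ (‖un - u‖ ^ 2 - ‖unext - u‖ ^ 2) / (2 * η)
      + η * ‖g‖ ^ 2 + (ε / η) * ‖un - u‖ + ε ^ 2 / η := by
  have hstep : unext - u = (un - u) - η • gtilde := by rw [hunext, sub_right_comm]
  have hnorm := norm_sq_le_two_mul_add_of_norm_sub_le hgtilde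
  have hsq : η * (ε / η) ^ 2 = ε ^ 2 / η := by field_simp
  calc F un - F u ≤ inner ℝ (un - u) g := hsubgrad
    _ ≤ inner ℝ (un - u) gtilde + ε / η * ‖un - u‖ :=
      real_inner_le_inner_add_of_norm_sub_le _ hgtilde
    _ = (‖un - u‖ ^ 2 - ‖unext - u‖ ^ 2) / (2 * η) + η / 2 * ‖gtilde‖ ^ 2
          + ε / η * ‖un - u‖ := by
      rw [hstep, real_inner_eq_norm_sq_sub_norm_sub_smul_sq_div _ _ hη.ne']
    _ ≤ _ := by linarith [mul_le_mul_of_nonneg_left hnorm hη.le]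

/-- Per-step descent inequality for projected functional stochastic gradient descent:
if `g` is a subgradient of `F` at `uⁿ`, `‖g - g̃‖ ≤ ε/η` and `u^{n+1} = uⁿ - η g̃`, then
`F(uⁿ) - F(u) ≤ (‖uⁿ - u‖² - ‖u^{n+1} - u‖²)/(2η) + η‖g‖² + (ε/η)‖uⁿ - u‖ + ε²/η`. -/
theorem per_step_descent_bound
    {H : Type*} [NormedAddCommGroup H] [InnerProductSpace ℝ H] [CompleteSpace H]
    (F : H → ℝ) (u un : H) (g : H)
    (hsubgrad : F un - F u ≤ inner ℝ (un - u) g)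
    (η ε : ℝ) (hη : 0 < η) (hε : 0 ≤ ε)
    (gtilde : H) (hgtilde : ‖g - gtilde‖ ≤ ε / η)
    (unext : H) (hunext : unext = un - η • gtilde) :
    F un - F u ≤ (‖un - u‖ ^ 2 - ‖unext - u‖ ^ 2) / (2 * η)
      + η * ‖g‖ ^ 2 + (ε / η) * ‖un - u‖ + ε ^ 2 / η :=
  per_step_descent_bound_general F u un g hsubgrad η ε hη gtilde hgtilde unext hunext
end

section
/- Let H be a real Hilbert space, let N ≥ 1, let u ∈ H, and let u⁰, …, u^N ∈ H. For n = 0, …, N−1, let F_n : H → ℝ, let g_n ∈ H satisfy the subgradient inequality F_n(uⁿ) − F_n(u) ≤ ⟨uⁿ − u, g_n⟩ and the bound ‖g_n‖ ≤ G, let η_n > 0 and ε_n ≥ 0, let g̃_n ∈ H satisfy ‖g_n − g̃_n‖ ≤ ε_n/η_n, let u^{n+1} = uⁿ − η_n·g̃_n, and suppose ‖uⁿ − u‖ ≤ R. Then ∑_{n=0}^{N−1} η_n·(F_n(uⁿ) − F_n(u)) ≤ (1/2)‖u⁰ − u‖² + R·∑_{n=0}^{N−1} ε_n + G²·∑_{n=0}^{N−1}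 η_n² + ∑_{n=0}^{N−1} ε_n². -/
/-!
Split `η gₙ = η g̃ₙ + η (gₙ - g̃ₙ)`. Pairing the exact step `η g̃ₙ` with `uⁿ - u` and expanding
`‖uⁿ⁺¹ - u‖² = ‖(uⁿ - u) - η g̃ₙ‖²` gives a telescoping difference of half squared distances plus
`½‖η g̃ₙ‖² ≤ G²η² + ε²`, while Cauchy–Schwarz bounds the sparsification error term by `R εₙ`.
-/

open Finset

theorem Finset.sum_range_le_of_le_sub_succ_add {α : Type*} [AddCommGroup α] [PartialOrder α]
    [IsOrderedAddMonoid α] {a c d : ℕ → α} {N : ℕ}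
    (h : ∀ n < N, a n ≤ d n - d (n + 1) + c n) (hd : 0 ≤ d N) :
    ∑ n ∈ range N, a n ≤ d 0 + ∑ n ∈ range N, c n :=
  calc ∑ n ∈ range N, a n ≤ ∑ n ∈ range N, (d n - d (n + 1) + c n) :=
        sum_le_sum fun n hn => h n (mem_range.mp hn)
    _ = d 0 - d N + ∑ n ∈ range N, c n := by rw [sum_add_distrib, sum_range_sub']
    _ ≤ d 0 + ∑ n ∈ range N, c n := by simpa using hd

section InexactSubgradientStep

variable {H : Type*} [SeminormedAddCommGroup H] [InnerProductSpace ℝ H]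

theorem real_inner_sub_eq_half_norm_sq_sub_step (x u s : H) :
    inner ℝ (x - u) s = 1 / 2 * ‖x - u‖ ^ 2 - 1 / 2 * ‖x - s - u‖ ^ 2 + 1 / 2 * ‖s‖ ^ 2 := by
  rw [sub_right_comm x s u, norm_sub_sq_real (x - u) s]
  ring

theorem mul_real_inner_le_of_inexact_step (x u g g' : H) (η : ℝ) :
    η * inner ℝ (x - u) g ≤ 1 / 2 * ‖x - u‖ ^ 2 - 1 / 2 * ‖x - η • g' - u‖ ^ 2
      + ‖x - u‖ * ‖η • (g - g')‖ + 1 / 2 * ‖η • g'‖ ^ 2 := by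
  have hsplit : η * inner ℝ (x - u) g =
      inner ℝ (x - u) (η • g') + inner ℝ (x - u) (η • (g - g')) := by
    rw [inner_smul_right, inner_smul_right, inner_sub_right]
    ring
  rw [hsplit, real_inner_sub_eq_half_norm_sq_sub_step]
  linarith [real_inner_le_norm (x - u) (η • (g - g'))]

theorem regret_le_of_inexact_subgradient_step {F : H → ℝ} {x u g g' : H} {η ε G R : ℝ}
    (hsub : F x - F u ≤ inner ℝ (x - u) g) (hg : ‖g‖ ≤ G) (hη : 0 < η)
    (hg' : ‖g - g'‖ ≤ ε / η) (hR : ‖x - u‖ ≤ R) :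
    η * (F x - F u) ≤ 1 / 2 * ‖x - u‖ ^ 2 - 1 / 2 * ‖x - η • g' - u‖ ^ 2
      + (R * ε + G ^ 2 * η ^ 2 + ε ^ 2) := by
  have herr : ‖η • (g - g')‖ ≤ ε := by
    rw [norm_smul, Real.norm_of_nonneg hη.le]
    exact (le_div_iff₀' hη).1 hg'
  have hε : 0 ≤ ε := (norm_nonneg _).trans herr
  have hstep : ‖η • g'‖ ≤ η * G + ε :=
    calc ‖η • g'‖ = ‖η • g - η • (g - g')‖ := by rw [smul_sub, sub_sub_cancel]
      _ ≤ ‖η • g‖ + ‖η • (g - g')‖ := norm_sub_le _ _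
      _ ≤ η * G + ε := by
        rw [norm_smul, Real.norm_of_nonneg hη.le]
        gcongr
  have hstep_sq : 1 / 2 * ‖η • g'‖ ^ 2 ≤ G ^ 2 * η ^ 2 + ε ^ 2 := by
    have := pow_le_pow_left₀ (norm_nonneg _) hstep 2
    nlinarith [sq_nonneg (η * G - ε)]
  have herr_inner : ‖x - u‖ * ‖η • (g - g')‖ ≤ R * ε :=
    (mul_le_mul_of_nonneg_left herr (norm_nonneg _)).trans (mul_le_mul_of_nonneg_right hR hε)
  calc η * (F x - F u) ≤ η * inner ℝ (x - u) g := mul_le_mul_of_nonneg_left hsub hη.le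
    _ ≤ _ := mul_real_inner_le_of_inexact_step x u g g' η
    _ ≤ _ := by linarith

end InexactSubgradientStep

theorem telescoped_regret_bound_general
    {H : Type*} [NormedAddCommGroup H] [InnerProductSpace ℝ H]
    (N : ℕ) (u : H) (useq : ℕ → H)
    (F : ℕ → H → ℝ) (g : ℕ → H) (G R : ℝ)
    (η : ℕ → ℝ) (ε : ℕ → ℝ) (gtilde : ℕ → H)
    (hsubgrad : ∀ n < N, F n (useq n) - F n u ≤ inner ℝ (useq n - u) (g n))
    (hgbound : ∀ n < N, ‖g n‖ ≤ G)
    (hη : ∀ n < N, 0 < η n)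
    (hgtilde : ∀ n < N, ‖g n - gtilde n‖ ≤ ε n / η n)
    (hrec : ∀ n < N, useq (n + 1) = useq n - η n • gtilde n)
    (hR : ∀ n < N, ‖useq n - u‖ ≤ R) :
    ∑ n ∈ Finset.range N, η n * (F n (useq n) - F n u) ≤
      (1 / 2) * ‖useq 0 - u‖ ^ 2 + R * ∑ n ∈ Finset.range N, ε n
        + G ^ 2 * ∑ n ∈ Finset.range N, (η n) ^ 2 + ∑ n ∈ Finset.range N, (ε n) ^ 2 := by
  have hstep : ∀ n < N, η n * (F n (useq n) - F n u) ≤ 1 / 2 * ‖useq n - u‖ ^ 2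
      - 1 / 2 * ‖useq (n + 1) - u‖ ^ 2 + (R * ε n + G ^ 2 * η n ^ 2 + ε n ^ 2) := fun n hn => by
    rw [hrec n hn]
    exact regret_le_of_inexact_subgradient_step (hsubgrad n hn) (hgbound n hn) (hη n hn)
      (hgtilde n hn) (hR n hn)
  calc ∑ n ∈ range N, η n * (F n (useq n) - F n u)
      ≤ 1 / 2 * ‖useq 0 - u‖ ^ 2 + ∑ n ∈ range N, (R * ε n + G ^ 2 * η n ^ 2 + ε n ^ 2) :=
        sum_range_le_of_le_sub_succ_add hstep (by positivity)
    _ = _ := by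
        rw [sum_add_distrib, sum_add_distrib, ← mul_sum, ← mul_sum]
        ring

/-- Telescoped regret bound underlying the convergence rate lemma: summing the per-step
descent inequalities over `n = 0, …, N-1` yields
`∑ η_n (F_n(uⁿ) - F_n(u)) ≤ (1/2)‖u⁰ - u‖² + R ∑ ε_n + G² ∑ η_n² + ∑ ε_n²`. -/
theorem telescoped_regret_bound
    {H : Type*} [NormedAddCommGroup H] [InnerProductSpace ℝ H] [CompleteSpace H]
    (N : ℕ) (hN : 1 ≤ N) (u : H) (useq : ℕ → H)
    (F : ℕ → H → ℝ) (g : ℕ → H) (G R : ℝ)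
    (η : ℕ → ℝ) (ε : ℕ → ℝ) (gtilde : ℕ → H)
    (hsubgrad : ∀ n < N, F n (useq n) - F n u ≤ inner ℝ (useq n - u) (g n))
    (hgbound : ∀ n < N, ‖g n‖ ≤ G)
    (hη : ∀ n < N, 0 < η n) (hε : ∀ n < N, 0 ≤ ε n)
    (hgtilde : ∀ n < N, ‖g n - gtilde n‖ ≤ ε n / η n)
    (hrec : ∀ n < N, useq (n + 1) = useq n - η n • gtilde n)
    (hR : ∀ n < N, ‖useq n - u‖ ≤ R) :
    ∑ n ∈ Finset.range N, η n * (F n (useq n) - F n u) ≤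
      (1 / 2) * ‖useq 0 - u‖ ^ 2 + R * ∑ n ∈ Finset.range N, ε n
        + G ^ 2 * ∑ n ∈ Finset.range N, (η n) ^ 2 + ∑ n ∈ Finset.range N, (ε n) ^ 2 :=
  telescoped_regret_bound_general N u useq F g G R η ε gtilde hsubgrad hgbound hη hgtilde hrec hR
end

section
/- Let H be a real Hilbert space, let N ≥ 1, let F : H → ℝ, let u* ∈ H, and let u⁰, …, u^N ∈ H. Fix constants η > 0, P₂ ≥ 0, G ≥ 0, R ≥ 0, and set ε = P₂·η². For n = 0, …, N−1, suppose there is g_n ∈ H with F(uⁿ) − F(u*) ≤ ⟨uⁿ − u*, g_n⟩ and ‖g_n‖ ≤ G, suppose ‖uⁿ − u*‖ ≤ R, and suppose u^{n+1} = uⁿ − η·g̃_n for some g̃_n ∈ H with ‖g_n − g̃_n‖ ≤ ε/η. Then min_{0 ≤ n ≤ N−1} (F(uⁿ) − F(u*)) ≤ ‖u⁰ − u*‖²/(2Nη) + (R·P₂ + G²)·η + P₂²·η³. -/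
/-!
Expanding `‖uⁿ⁺¹ - u*‖² = ‖uⁿ - u* - η g̃ₙ‖²` and using the subgradient inequality shows that
each step decreases the squared distance to `u*` by `2η (F(uⁿ) - F(u*))`, up to an error
`O(η²)` coming from the step length `η ‖g̃ₙ‖ ≤ η (G + P₂η)` and from the pruning error
`η ⟨uⁿ - u*, gₙ - g̃ₙ⟩ ≤ η R P₂η`. Summing over `n < N`, the distances telescope and the
minimum is bounded by the average.
-/

open Finset

theorem norm_sub_smul_sq_real {H : Type*} [NormedAddCommGroup H] [InnerProductSpace ℝ H]
    (x v : H) (η : ℝ) :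
    ‖x - η • v‖ ^ 2 = ‖x‖ ^ 2 - 2 * η * inner ℝ x v + η ^ 2 * ‖v‖ ^ 2 := by
  rw [norm_sub_sq_real, real_inner_smul_right, norm_smul, mul_pow, Real.norm_eq_abs, sq_abs]
  ring

theorem two_mul_inner_le_of_inexact_step {H : Type*} [NormedAddCommGroup H]
    [InnerProductSpace ℝ H] {x g g' : H} {η R G δ : ℝ} (hη : 0 ≤ η)
    (hx : ‖x‖ ≤ R) (hg : ‖g‖ ≤ G) (hgg' : ‖g - g'‖ ≤ δ) :
    2 * η * inner ℝ x g ≤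
      ‖x‖ ^ 2 - ‖x - η • g'‖ ^ 2 + 2 * η * (R * δ) + 2 * η ^ 2 * (G ^ 2 + δ ^ 2) := by
  have herror : inner ℝ x (g - g') ≤ R * δ :=
    (real_inner_le_norm _ _).trans <|
      mul_le_mul hx hgg' (norm_nonneg _) ((norm_nonneg _).trans hx)
  have hsplit : inner ℝ x g = inner ℝ x g' + inner ℝ x (g - g') := by
    rw [inner_sub_right]; ring
  have hstep : ‖g'‖ ≤ G + δ := (norm_le_norm_add_norm_sub g g').trans (add_le_add hg hgg')
  have hstep_sq : ‖g'‖ ^ 2 ≤ 2 * (G ^ 2 + δ ^ 2) := by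
    nlinarith [norm_nonneg g', sq_nonneg (G - δ)]
  rw [norm_sub_smul_sq_real, hsplit]
  nlinarith [mul_le_mul_of_nonneg_left herror hη, mul_le_mul_of_nonneg_left hstep_sq (sq_nonneg η)]

theorem Finset.inf'_range_le_of_mul_le_sub_succ {N : ℕ} (hN : (range N).Nonempty)
    {a d : ℕ → ℝ} {t c : ℝ} (ht : 0 < t) (hdN : 0 ≤ d N)
    (hstep : ∀ n < N, t * a n ≤ d n - d (n + 1) + c) :
    (range N).inf' hN a ≤ d 0 / (N * t) + c / t := by
  set m := (range N).inf' hN a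
  have hNpos : (0 : ℝ) < N := Nat.cast_pos.mpr (Nat.pos_of_ne_zero (nonempty_range_iff.mp hN))
  have hsum : N * (t * m) ≤ d 0 - d N + N * c := by
    calc N * (t * m) = ∑ n ∈ range N, t * m := by simp
      _ ≤ ∑ n ∈ range N, (d n - d (n + 1) + c) := sum_le_sum fun n hn =>
          (mul_le_mul_of_nonneg_left (inf'_le a hn) ht.le).trans (hstep n (mem_range.mp hn))
      _ = d 0 - d N + N * c := by
          rw [sum_add_distrib, sum_range_sub' d, sum_const, card_range, nsmul_eq_mul]
  rw [div_add_div _ _ (by positivity) ht.ne', le_div_iff₀ (by positivity)]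
  nlinarith

/-- Deterministic core of the main convergence theorem: with constant step size `η` and
pruning tolerance `ε = P₂η²`, the best iterate among `u⁰, …, u^{N-1}` satisfies
`min_n (F(uⁿ) - F(u*)) ≤ ‖u⁰ - u*‖²/(2Nη) + (R P₂ + G²) η + P₂² η³`. -/
theorem constant_stepsize_convergence_bound
    {H : Type*} [NormedAddCommGroup H] [InnerProductSpace ℝ H]
    (N : ℕ) (hN : 1 ≤ N)
    (F : H → ℝ) (ustar : H) (useq : ℕ → H)
    (η P₂ G R ε : ℝ) (hη : 0 < η)
    (hε : ε = P₂ * η ^ 2)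
    (g gtilde : ℕ → H)
    (hsubgrad : ∀ n < N, F (useq n) - F ustar ≤ inner ℝ (useq n - ustar) (g n))
    (hgbound : ∀ n < N, ‖g n‖ ≤ G)
    (hRbound : ∀ n < N, ‖useq n - ustar‖ ≤ R)
    (hgtilde : ∀ n < N, ‖g n - gtilde n‖ ≤ ε / η)
    (hrec : ∀ n < N, useq (n + 1) = useq n - η • gtilde n) :
    (Finset.range N).inf' (Finset.nonempty_range_iff.mpr (by omega))
        (fun n => F (useq n) - F ustar) ≤
      ‖useq 0 - ustar‖ ^ 2 / (2 * N * η) + (R * P₂ + G ^ 2) * η + P₂ ^ 2 * η ^ 3 := by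
  have hεη : ε / η = P₂ * η := by rw [hε]; field_simp
  have hdescent : ∀ n < N, 2 * η * (F (useq n) - F ustar) ≤
      ‖useq n - ustar‖ ^ 2 - ‖useq (n + 1) - ustar‖ ^ 2 +
        (2 * η * (R * (P₂ * η)) + 2 * η ^ 2 * (G ^ 2 + (P₂ * η) ^ 2)) := by
    intro n hn
    have hnext : useq (n + 1) - ustar = (useq n - ustar) - η • gtilde n := by
      rw [hrec n hn]; abel
    rw [hnext, ← add_assoc]
    exact (mul_le_mul_of_nonneg_left (hsubgrad n hn) (by positivity)).trans <|
      two_mul_inner_le_of_inexact_step hη.le (hRbound n hn) (hgbound n hn)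
        (hεη ▸ hgtilde n hn)
  refine (inf'_range_le_of_mul_le_sub_succ (d := fun n => ‖useq n - ustar‖ ^ 2) _
    (by positivity) (sq_nonneg _) hdescent).trans_eq ?_
  field_simp
  ring
end
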